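/- Let A > 0 and B > 0, and define D = (e^{−B} − e^{−(A+B)})/A, F = (log(A+B) − log B)/A, H = (1/A)·∫_B^{A+B} e^{−t}/t dt, and J = (D+1)·H − D·F − (1/A)·∫_{2B}^{2(A+B)} e^{−t}/t dt. Set ψ̃₂(x) = Ψ02(x) − D and ψ̃₃(x) = Ψ03(x) − (F − H) − (J/‖ψ̃₂‖²)·ψ̃₂(x), where ‖·‖ is the L²([0,1]) norm. Then ψ̃₂ ≠ 0, ψ̃₃ ≠ 0, and the three functions ψ₀₁ = 1, ψ₀₂ = ψ̃₂/‖ψ̃₂‖, ψ₀₃ = ψ̃₃/‖ψ̃₃‖ form an orthonormal family in L²([0,1]) whose linear span equals the span of {Ψ01, Ψ02, Ψ03}. -/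

import Mathlib

open MeasureTheory Real Set


private lemma myexp_int (a b : ℝ) :
    ∫ t in a..b, Real.exp (-t) = Real.exp (-a) - Real.exp (-b) := by
  have h : ∀ t ∈ uIcc a b, HasDerivAt (fun t => -Real.exp (-t)) (Real.exp (-t)) t := by
    intro t _
    exact ((hasDerivAt_neg t).exp).neg.congr_deriv (by ring)
  rw [intervalIntegral.integral_eq_sub_of_hasDerivAt h
    ((Real.continuous_exp.comp continuous_neg).intervalIntegrable _ _)]
  ring

private lemma memL2_of_contOn {f : ℝ → ℝ} (hf : ContinuousOn f (Icc (0:ℝ) 1)) :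
    MemLp f 2 (volume.restrict (Icc (0:ℝ) 1)) := by
  have hmeas : AEStronglyMeasurable f (volume.restrict (Icc (0:ℝ) 1)) :=
    hf.aestronglyMeasurable measurableSet_Icc
  obtain ⟨C, hC⟩ := (isCompact_Icc (a := (0:ℝ)) (b := 1)).exists_bound_of_continuousOn hf
  have hfin : IsFiniteMeasure (volume.restrict (Icc (0:ℝ) 1)) := by
    constructor
    rw [Measure.restrict_apply_univ]
    simp [Real.volume_Icc]
  exact MemLp.of_bound hmeas C ((ae_restrict_iff' measurableSet_Icc).2 (ae_of_all _ hC))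

private lemma inner_toLp_eq {f g : ℝ → ℝ}
    (hf : MemLp f 2 (volume.restrict (Icc (0:ℝ) 1)))
    (hg : MemLp g 2 (volume.restrict (Icc (0:ℝ) 1))) :
    (inner ℝ (hf.toLp f) (hg.toLp g) : ℝ) = ∫ x in (0:ℝ)..1, f x * g x := by
  rw [MeasureTheory.L2.inner_def]
  have h1 : ∀ᵐ x ∂(volume.restrict (Icc (0:ℝ) 1)),
      (inner ℝ ((hf.toLp f) x) ((hg.toLp g) x) : ℝ) = f x * g x := by
    filter_upwards [hf.coeFn_toLp, hg.coeFn_toLp] with x h2 h3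
    rw [h2, h3, RCLike.inner_apply]
    simp; ring
  rw [integral_congr_ae h1]
  rw [intervalIntegral.integral_of_le (zero_le_one), ← integral_Icc_eq_integral_Ioc]

private lemma toLp_comb3 {μ : Measure ℝ} {f g k h : ℝ → ℝ} {c d e : ℝ}
    (hf : MemLp f 2 μ) (hg : MemLp g 2 μ) (hk : MemLp k 2 μ) (hh : MemLp h 2 μ)
    (hcomb : ∀ x, h x = c * f x + d * g x + e * k x) :
    hh.toLp h = c • hf.toLp f + d • hg.toLp g + e • hk.toLp k := by
  rw [← MemLp.toLp_const_smul c hf, ← MemLp.toLp_const_smul d hg, ← MemLp.toLp_const_smul e hk,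
    ← MemLp.toLp_add, ← MemLp.toLp_add]
  exact MemLp.toLp_congr _ _ (Filter.EventuallyEq.of_eq (funext fun x => by
    simp [hcomb x, Pi.add_apply, Pi.smul_apply, smul_eq_mul]))

private lemma int_expdiv (a b : ℝ) (ha : 0 < a) (hb : a ≤ b) :
    IntervalIntegrable (fun t => Real.exp (-t) / t) volume a b := by
  apply ContinuousOn.intervalIntegrable
  apply ContinuousOn.div (by fun_prop) continuousOn_id
  intro t ht
  rw [uIcc_of_le hb] at ht
  exact ne_of_gt (lt_of_lt_of_le ha ht.1)

private lemma int_onediv (a b : ℝ) (ha : 0 < a) (hb : a ≤ b) :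
    IntervalIntegrable (fun t => 1 / t) volume a b := by
  apply ContinuousOn.intervalIntegrable
  apply ContinuousOn.div continuousOn_const continuousOn_id
  intro t ht
  rw [uIcc_of_le hb] at ht
  exact ne_of_gt (lt_of_lt_of_le ha ht.1)

-- ∫ Ψ02
private lemma calc_ia {A B : ℝ} (hA : 0 < A) :
    ∫ x in (0:ℝ)..1, Real.exp (-(A * x + B))
      = A⁻¹ * (Real.exp (-B) - Real.exp (-(A + B))) := by
  rw [intervalIntegral.integral_comp_mul_add (fun t => Real.exp (-t)) hA.ne' B]
  simp only [mul_zero, zero_add, mul_one, smul_eq_mul, myexp_int]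

-- ∫ Ψ03
private lemma calc_ib {A B : ℝ} (hA : 0 < A) (hB : 0 < B) :
    ∫ x in (0:ℝ)..1, (1 - Real.exp (-(A * x + B))) / (A * x + B)
      = A⁻¹ * ((Real.log (A + B) - Real.log B)
          - ∫ t in B..(A + B), Real.exp (-t) / t) := by
  rw [intervalIntegral.integral_comp_mul_add (fun t => (1 - Real.exp (-t)) / t) hA.ne' B]
  simp only [mul_zero, zero_add, mul_one, smul_eq_mul]
  congr 1
  have hsplit : ∀ t : ℝ, (1 - Real.exp (-t)) / t = 1 / t - Real.exp (-t) / t :=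
    fun t => sub_div _ _ _
  simp only [hsplit]
  rw [intervalIntegral.integral_sub (int_onediv B (A+B) hB (by linarith))
    (int_expdiv B (A+B) hB (by linarith))]
  congr 1
  rw [integral_one_div, Real.log_div (by linarith) hB.ne']
  rw [uIcc_of_le (by linarith)]
  intro h
  exact absurd h.1 (by linarith)

-- ∫ exp(-t)^2/t over B..A+B equals the doubled-range integral
private lemma calc_double {A B : ℝ} (hA : 0 < A) (hB : 0 < B) :
    ∫ t in B..(A + B), Real.exp (-t) * Real.exp (-t) / t
      = ∫ t in (2 * B)..(2 * (A + B)), Real.exp (-t) / t := by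
  have key : (fun t : ℝ => Real.exp (-t) * Real.exp (-t) / t)
      = fun t => 2 * ((fun s => Real.exp (-s) / s) (2 * t)) := by
    funext t
    simp only
    rw [show -(2 * t) = -t + -t by ring, Real.exp_add, mul_div_assoc', mul_comm (2:ℝ) t]
    rw [mul_comm (2:ℝ) (Real.exp (-t) * Real.exp (-t)), mul_div_mul_right _ _ (two_ne_zero)]
  rw [key, intervalIntegral.integral_const_mul,
    intervalIntegral.integral_comp_mul_left (fun s => Real.exp (-s) / s) two_ne_zero]
  simp [smul_eq_mul]

-- ∫ Ψ02 * Ψ03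
private lemma calc_ic {A B : ℝ} (hA : 0 < A) (hB : 0 < B) :
    ∫ x in (0:ℝ)..1, Real.exp (-(A * x + B)) * ((1 - Real.exp (-(A * x + B))) / (A * x + B))
      = A⁻¹ * ((∫ t in B..(A + B), Real.exp (-t) / t)
          - ∫ t in (2 * B)..(2 * (A + B)), Real.exp (-t) / t) := by
  rw [intervalIntegral.integral_comp_mul_add
    (fun t => Real.exp (-t) * ((1 - Real.exp (-t)) / t)) hA.ne' B]
  simp only [mul_zero, zero_add, mul_one, smul_eq_mul]
  congr 1
  have hsplit : ∀ t : ℝ, Real.exp (-t) * ((1 - Real.exp (-t)) / t)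
      = Real.exp (-t) / t - Real.exp (-t) * Real.exp (-t) / t := by
    intro t
    rw [mul_div_assoc']
    rw [show Real.exp (-t) * (1 - Real.exp (-t)) = Real.exp (-t) - Real.exp (-t) * Real.exp (-t) by ring]
    exact sub_div _ _ _
  simp only [hsplit]
  rw [intervalIntegral.integral_sub (int_expdiv B (A+B) hB (by linarith))]
  · rw [calc_double hA hB]
  · have := (int_expdiv B (A+B) hB (by linarith))
    have h2 : IntervalIntegrable (fun t => Real.exp (-t) * Real.exp (-t) / t) volume B (A+B) := by
      apply ContinuousOn.intervalIntegrable
      apply ContinuousOn.div (by fun_prop) continuousOn_id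
      intro t ht
      rw [uIcc_of_le (by linarith : B ≤ A + B)] at ht
      exact ne_of_gt (lt_of_lt_of_le hB ht.1)
    exact h2


private lemma four_point_contradiction {t d u v K L : ℝ}
    (hu : u ≠ 0) (hv0 : v ≠ 0) (hd : d ≠ 0) (hv : v ≠ 1)
    (E0 : 1 - u = K * t + L * (t * u))
    (E1 : 1 - u * v = K * (t + d) + L * ((t + d) * (u * v)))
    (E2 : 1 - u * v^2 = K * (t + 2*d) + L * ((t + 2*d) * (u * v^2)))
    (E3 : 1 - u * v^3 = K * (t + 3*d) + L * ((t + 3*d) * (u * v^3))) : False := by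
  have hv' : 1 - v ≠ 0 := sub_ne_zero.2 (Ne.symm hv)
  have h1 : u * (1 - v) * ((1 - v) - L * (2*d*v - t*(1-v))) = 0 := by
    linear_combination 2*E1 - E0 - E2
  have h2 : u * v * (1 - v) * ((1 - v) - L * (2*d*v - (t+d)*(1-v))) = 0 := by
    linear_combination 2*E2 - E1 - E3
  have r1 : (1 - v) - L * (2*d*v - t*(1-v)) = 0 := by
    rcases mul_eq_zero.mp h1 with h | h
    · exact absurd h (mul_ne_zero hu hv')
    · exact h
  have r2 : (1 - v) - L * (2*d*v - (t+d)*(1-v)) = 0 := by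
    rcases mul_eq_zero.mp h2 with h | h
    · exact absurd h (mul_ne_zero (mul_ne_zero hu hv0) hv')
    · exact h
  have hL : L * (d * (1 - v)) = 0 := by linear_combination r2 - r1
  rcases mul_eq_zero.mp hL with h | h
  · rw [h] at r1; simp at r1; exact hv' (by linarith)
  · exact absurd h (mul_ne_zero hd hv')

set_option maxHeartbeats 1000000 in
/-- The Gram–Schmidt construction: with `A, B > 0` and the explicit constants
`D, F, H, J`, the functions `ψ₀₁ = 1`, `ψ₀₂ = ψ̃₂/‖ψ̃₂‖`, `ψ₀₃ = ψ̃₃/‖ψ̃₃‖` (with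
`ψ̃₂ = Ψ02 − D` and `ψ̃₃ = Ψ03 − (F − H) − (J/‖ψ̃₂‖²)·ψ̃₂`, norms taken in `L²([0,1])`)
are well defined (`ψ̃₂ ≠ 0`, `ψ̃₃ ≠ 0`), form an orthonormal family in `L²([0,1])`,
and their span equals the span of `{Ψ01, Ψ02, Ψ03}`. -/
theorem nelson_siegel_gram_schmidt
    (A B D F H J n2 n3 : ℝ) (hA : 0 < A) (hB : 0 < B)
    (Ψ01 Ψ02 Ψ03 ψt₂ ψt₃ ψ₀₁ ψ₀₂ ψ₀₃ : ℝ → ℝ)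
    (hΨ01 : Ψ01 = fun _ => (1 : ℝ))
    (hΨ02 : Ψ02 = fun x => Real.exp (-(A * x + B)))
    (hΨ03 : Ψ03 = fun x => (1 - Real.exp (-(A * x + B))) / (A * x + B))
    (hD : D = (Real.exp (-B) - Real.exp (-(A + B))) / A)
    (hF : F = (Real.log (A + B) - Real.log B) / A)
    (hH : H = (1 / A) * ∫ t in B..(A + B), Real.exp (-t) / t)
    (hJ : J = (D + 1) * H - D * F
        - (1 / A) * ∫ t in (2 * B)..(2 * (A + B)), Real.exp (-t) / t)
    (hψt₂ : ψt₂ = fun x => Ψ02 x - D)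
    (hn2 : n2 = ∫ x in (0:ℝ)..1, (ψt₂ x) ^ 2)  -- `n2 = ‖ψ̃₂‖²` in `L²([0,1])`
    (hψt₃ : ψt₃ = fun x => Ψ03 x - (F - H) - (J / n2) * ψt₂ x)
    (hn3 : n3 = ∫ x in (0:ℝ)..1, (ψt₃ x) ^ 2)  -- `n3 = ‖ψ̃₃‖²` in `L²([0,1])`
    (hψ₀₁ : ψ₀₁ = fun _ => (1 : ℝ))
    (hψ₀₂ : ψ₀₂ = fun x => ψt₂ x / Real.sqrt n2)
    (hψ₀₃ : ψ₀₃ = fun x => ψt₃ x / Real.sqrt n3) :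
    ∃ (ht2 : MemLp ψt₂ 2 (volume.restrict (Icc (0:ℝ) 1)))
      (ht3 : MemLp ψt₃ 2 (volume.restrict (Icc (0:ℝ) 1)))
      (h1 : MemLp ψ₀₁ 2 (volume.restrict (Icc (0:ℝ) 1)))
      (h2 : MemLp ψ₀₂ 2 (volume.restrict (Icc (0:ℝ) 1)))
      (h3 : MemLp ψ₀₃ 2 (volume.restrict (Icc (0:ℝ) 1)))
      (g1 : MemLp Ψ01 2 (volume.restrict (Icc (0:ℝ) 1)))
      (g2 : MemLp Ψ02 2 (volume.restrict (Icc (0:ℝ) 1)))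
      (g3 : MemLp Ψ03 2 (volume.restrict (Icc (0:ℝ) 1))),
      ht2.toLp ψt₂ ≠ 0 ∧
      ht3.toLp ψt₃ ≠ 0 ∧
      Orthonormal ℝ ![h1.toLp ψ₀₁, h2.toLp ψ₀₂, h3.toLp ψ₀₃] ∧
      Submodule.span ℝ ({h1.toLp ψ₀₁, h2.toLp ψ₀₂, h3.toLp ψ₀₃} :
          Set (Lp ℝ 2 (volume.restrict (Icc (0:ℝ) 1)))) =
        Submodule.span ℝ {g1.toLp Ψ01, g2.toLp Ψ02, g3.toLp Ψ03} := by
  have hAB : (0:ℝ) < A + B := by linarith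
  -- continuity
  have c02 : Continuous Ψ02 := by rw [hΨ02]; fun_prop
  have hden : ∀ x : ℝ, 0 ≤ x → A * x + B ≠ 0 := fun x hx => by nlinarith
  have c03 : ContinuousOn Ψ03 (Icc (0:ℝ) 1) := by
    rw [hΨ03]
    exact ContinuousOn.div (by fun_prop) (by fun_prop) (fun x hx => hden x hx.1)
  have ct2 : Continuous ψt₂ := by rw [hψt₂]; exact c02.sub continuous_const
  have ct3 : ContinuousOn ψt₃ (Icc (0:ℝ) 1) := by
    rw [hψt₃]
    exact (c03.sub continuousOn_const).sub (continuous_const.mul ct2).continuousOn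
  -- interval integrability helper
  have ii : ∀ {f : ℝ → ℝ}, ContinuousOn f (Icc (0:ℝ) 1) →
      IntervalIntegrable f volume 0 1 := by
    intro f hf
    apply ContinuousOn.intervalIntegrable
    rwa [uIcc_of_le zero_le_one]
  -- MemLp
  have hg1 : MemLp Ψ01 2 (volume.restrict (Icc (0:ℝ) 1)) :=
    memL2_of_contOn (by rw [hΨ01]; exact continuousOn_const)
  have hg2 : MemLp Ψ02 2 (volume.restrict (Icc (0:ℝ) 1)) := memL2_of_contOn c02.continuousOn
  have hg3 : MemLp Ψ03 2 (volume.restrict (Icc (0:ℝ) 1)) := memL2_of_contOn c03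
  have hmt2 : MemLp ψt₂ 2 (volume.restrict (Icc (0:ℝ) 1)) := memL2_of_contOn ct2.continuousOn
  have hmt3 : MemLp ψt₃ 2 (volume.restrict (Icc (0:ℝ) 1)) := memL2_of_contOn ct3
  have hm1 : MemLp ψ₀₁ 2 (volume.restrict (Icc (0:ℝ) 1)) :=
    memL2_of_contOn (by rw [hψ₀₁]; exact continuousOn_const)
  have hm2 : MemLp ψ₀₂ 2 (volume.restrict (Icc (0:ℝ) 1)) :=
    memL2_of_contOn (by rw [hψ₀₂]; exact ct2.continuousOn.div_const _)
  have hm3 : MemLp ψ₀₃ 2 (volume.restrict (Icc (0:ℝ) 1)) :=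
    memL2_of_contOn (by rw [hψ₀₃]; exact ct3.div_const _)
  -- base integrals
  have ia' : ∫ x in (0:ℝ)..1, Ψ02 x = D := by
    simp only [hΨ02]
    rw [calc_ia hA, hD]; ring
  have ib' : ∫ x in (0:ℝ)..1, Ψ03 x = F - H := by
    simp only [hΨ03]
    rw [calc_ib hA hB, hF, hH]; ring
  have ic' : ∫ x in (0:ℝ)..1, Ψ02 x * Ψ03 x
      = A⁻¹ * ((∫ t in B..(A + B), Real.exp (-t) / t)
          - ∫ t in (2 * B)..(2 * (A + B)), Real.exp (-t) / t) := by
    simp only [hΨ02, hΨ03]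
    exact calc_ic hA hB
  -- derived integrals
  have i2 : ∫ x in (0:ℝ)..1, ψt₂ x = 0 := by
    simp only [hψt₂]
    rw [intervalIntegral.integral_sub (ii c02.continuousOn) intervalIntegrable_const,
      ia', intervalIntegral.integral_const]
    simp
  have i3 : ∫ x in (0:ℝ)..1, ψt₃ x = 0 := by
    simp only [hψt₃]
    rw [intervalIntegral.integral_sub
        ((ii c03).sub intervalIntegrable_const)
        ((ii ct2.continuousOn).const_mul _),
      intervalIntegral.integral_sub (ii c03) intervalIntegrable_const,
      intervalIntegral.integral_const_mul, ib', i2, intervalIntegral.integral_const]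
    simp
  have i2303 : ∫ x in (0:ℝ)..1, ψt₂ x * Ψ03 x
      = A⁻¹ * ((∫ t in B..(A + B), Real.exp (-t) / t)
          - ∫ t in (2 * B)..(2 * (A + B)), Real.exp (-t) / t) - D * (F - H) := by
    have hexp : ∀ x : ℝ, ψt₂ x * Ψ03 x = Ψ02 x * Ψ03 x - D * Ψ03 x := by
      intro x; rw [hψt₂]; ring
    simp only [hexp]
    rw [intervalIntegral.integral_sub
        (ii (f := fun x => Ψ02 x * Ψ03 x) (c02.continuousOn.mul c03)) ((ii c03).const_mul _),
      intervalIntegral.integral_const_mul, ic', ib']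
  -- positivity of n2
  have hmono : ∀ x y : ℝ, x < y → ψt₂ y < ψt₂ x := by
    intro x y hxy
    simp only [hψt₂, hΨ02]
    have h : Real.exp (-(A * y + B)) < Real.exp (-(A * x + B)) := by
      apply Real.exp_lt_exp.2; nlinarith
    linarith
  have hsqint : ∀ a b : ℝ, IntervalIntegrable (fun x => (ψt₂ x)^2) volume a b :=
    fun a b => (ct2.pow 2).intervalIntegrable a b
  have hn2pos : 0 < n2 := by
    rw [hn2]
    rw [← intervalIntegral.integral_add_adjacent_intervals (a := (0:ℝ)) (b := (1/2:ℝ))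
      (c := (1:ℝ)) (hsqint _ _) (hsqint _ _)]
    rcases le_or_gt 0 (ψt₂ (1/2)) with hc | hc
    · have hpos : 0 < ∫ x in (0:ℝ)..(1/2:ℝ), (ψt₂ x)^2 := by
        apply intervalIntegral.intervalIntegral_pos_of_pos_on (hsqint _ _) _ (by norm_num)
        intro x hx
        exact sq_pos_of_ne_zero (ne_of_gt (lt_of_le_of_lt hc (hmono x (1/2) hx.2)))
      have hnn : 0 ≤ ∫ x in (1/2:ℝ)..1, (ψt₂ x)^2 :=
        intervalIntegral.integral_nonneg (by norm_num) (fun x _ => sq_nonneg _)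
      linarith
    · have hpos : 0 < ∫ x in (1/2:ℝ)..1, (ψt₂ x)^2 := by
        apply intervalIntegral.intervalIntegral_pos_of_pos_on (hsqint _ _) _ (by norm_num)
        intro x hx
        exact sq_pos_of_ne_zero (ne_of_lt ((hmono (1/2) x hx.1).trans hc))
      have hnn : 0 ≤ ∫ x in (0:ℝ)..(1/2:ℝ), (ψt₂ x)^2 :=
        intervalIntegral.integral_nonneg (by norm_num) (fun x _ => sq_nonneg _)
      linarith
  have i23 : ∫ x in (0:ℝ)..1, ψt₂ x * ψt₃ x = 0 := by
    have hexp : ∀ x : ℝ, ψt₂ x * ψt₃ x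
        = ψt₂ x * Ψ03 x - (F - H) * ψt₂ x - (J / n2) * (ψt₂ x)^2 := by
      intro x; rw [hψt₃]; ring
    simp only [hexp]
    rw [intervalIntegral.integral_sub (IntervalIntegrable.sub
        (ii (f := fun x => ψt₂ x * Ψ03 x) (ct2.continuousOn.mul c03)) ((ii ct2.continuousOn).const_mul _))
        ((hsqint 0 1).const_mul _),
      intervalIntegral.integral_sub (ii (f := fun x => ψt₂ x * Ψ03 x) (ct2.continuousOn.mul c03))
        ((ii ct2.continuousOn).const_mul _),
      intervalIntegral.integral_const_mul, intervalIntegral.integral_const_mul,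
      i2303, i2, ← hn2, div_mul_cancel₀ _ hn2pos.ne']
    linear_combination -hJ - hH
  -- positivity of n3
  have hn3nn : 0 ≤ n3 := hn3 ▸ intervalIntegral.integral_nonneg zero_le_one (fun x _ => sq_nonneg _)
  have hn3pos : 0 < n3 := by
    rcases hn3nn.lt_or_eq with hlt | heq
    · exact hlt
    exfalso
    -- ψt₃ vanishes on (0,1)
    have ca : ∀ x : ℝ, 0 ≤ x → ContinuousAt ψt₃ x := by
      intro x hx
      rw [hψt₃, hΨ03]
      apply ContinuousAt.sub
      apply ContinuousAt.sub
      · exact ContinuousAt.div (by fun_prop) (by fun_prop) (hden x hx)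
      · exact continuousAt_const
      · exact continuousAt_const.mul ct2.continuousAt
    have hzero : ∀ x ∈ Ioo (0:ℝ) 1, ψt₃ x = 0 := by
      intro x₀ hx₀
      by_contra hne
      have hev : ∀ᶠ x in nhds x₀, ψt₃ x ≠ 0 := (ca x₀ hx₀.1.le).eventually_ne hne
      have hev2 : ∀ᶠ x in nhds x₀, x ∈ Ioo (0:ℝ) 1 := isOpen_Ioo.eventually_mem hx₀
      obtain ⟨ε, hε, hball⟩ := Metric.eventually_nhds_iff_ball.mp (hev.and hev2)
      have hmemc : ∀ x : ℝ, x₀ - ε/2 ≤ x → x ≤ x₀ + ε/2 → ψt₃ x ≠ 0 ∧ x ∈ Ioo (0:ℝ) 1 := by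
        intro x hx1 hx2
        apply hball
        rw [Metric.mem_ball, Real.dist_eq, abs_lt]
        constructor <;> linarith
      have h0c := hmemc _ (le_refl _) (by linarith)
      have h1c := hmemc _ (by linarith) (le_refl _)
      have hii3 : ∀ a b : ℝ, a ∈ Icc (0:ℝ) 1 → b ∈ Icc (0:ℝ) 1 →
          IntervalIntegrable (fun x => (ψt₃ x)^2) volume a b := by
        intro a b ha hb
        apply ContinuousOn.intervalIntegrable
        apply (ct3.mono _).pow
        intro x hx
        rcases le_total a b with hab | hab
        · rw [uIcc_of_le hab] at hx
          exact ⟨le_trans ha.1 hx.1, le_trans hx.2 hb.2⟩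
        · rw [uIcc_of_ge hab] at hx
          exact ⟨le_trans hb.1 hx.1, le_trans hx.2 ha.2⟩
      have hsum : (∫ x in (0:ℝ)..(x₀ - ε/2), (ψt₃ x)^2)
            + ((∫ x in (x₀ - ε/2)..(x₀ + ε/2), (ψt₃ x)^2)
            + ∫ x in (x₀ + ε/2)..(1:ℝ), (ψt₃ x)^2) = n3 := by
        rw [intervalIntegral.integral_add_adjacent_intervals
              (hii3 _ _ (mem_Icc.mpr ⟨h0c.2.1.le, h0c.2.2.le⟩) (mem_Icc.mpr ⟨h1c.2.1.le, h1c.2.2.le⟩))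
              (hii3 _ _ (mem_Icc.mpr ⟨h1c.2.1.le, h1c.2.2.le⟩) (by norm_num)),
          intervalIntegral.integral_add_adjacent_intervals
              (hii3 _ _ (by norm_num) (mem_Icc.mpr ⟨h0c.2.1.le, h0c.2.2.le⟩))
              (hii3 _ _ (mem_Icc.mpr ⟨h0c.2.1.le, h0c.2.2.le⟩) (by norm_num)), hn3]
      have hmid : 0 < ∫ x in (x₀ - ε/2)..(x₀ + ε/2), (ψt₃ x)^2 := by
        apply intervalIntegral.intervalIntegral_pos_of_pos_on
          (hii3 _ _ (mem_Icc.mpr ⟨h0c.2.1.le, h0c.2.2.le⟩) (mem_Icc.mpr ⟨h1c.2.1.le, h1c.2.2.le⟩))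
          _ (by linarith)
        intro x hx
        exact sq_pos_of_ne_zero (hmemc x hx.1.le hx.2.le).1
      have hl : 0 ≤ ∫ x in (0:ℝ)..(x₀ - ε/2), (ψt₃ x)^2 :=
        intervalIntegral.integral_nonneg h0c.2.1.le (fun x _ => sq_nonneg _)
      have hr : 0 ≤ ∫ x in (x₀ + ε/2)..(1:ℝ), (ψt₃ x)^2 :=
        intervalIntegral.integral_nonneg h1c.2.2.le (fun x _ => sq_nonneg _)
      rw [← heq] at hsum
      linarith
    -- four point contradiction
    have heval : ∀ x ∈ Ioo (0:ℝ) 1,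
        1 - Real.exp (-(A * x + B))
          = (F - H - (J / n2) * D) * (A * x + B)
            + (J / n2) * ((A * x + B) * Real.exp (-(A * x + B))) := by
      intro x hx
      have h0 := hzero x hx
      rw [hψt₃, hΨ03, hψt₂] at h0
      simp only at h0
      have hdne := hden x hx.1.le
      have h2 : (1 - Real.exp (-(A * x + B))) / (A * x + B)
          = (F - H) + (J / n2) * (Ψ02 x - D) := by linarith
      have h3 : 1 - Real.exp (-(A * x + B))
          = ((F - H) + (J / n2) * (Ψ02 x - D)) * (A * x + B) := by
        rw [← h2, div_mul_cancel₀ _ hdne]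
      rw [hΨ02] at h3
      simp only at h3
      linear_combination h3
    have hq : ∀ i : ℕ, i ≤ 3 → (((i:ℝ) + 1) / 5) ∈ Ioo (0:ℝ) 1 := by
      intro i hi
      constructor
      · positivity
      · have : (i:ℝ) ≤ 3 := by exact_mod_cast hi
        linarith
    have hexpi : ∀ i : ℕ, Real.exp (-(A * (((i:ℝ) + 1) / 5) + B))
        = Real.exp (-(A / 5 + B)) * Real.exp (-(A / 5)) ^ i := by
      intro i
      rw [← Real.exp_nat_mul, ← Real.exp_add]
      congr 1
      ring
    have E0 := heval _ (hq 0 (by norm_num))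
    have E1 := heval _ (hq 1 (by norm_num))
    have E2 := heval _ (hq 2 (by norm_num))
    have E3 := heval _ (hq 3 (by norm_num))
    rw [hexpi 0] at E0
    rw [hexpi 1] at E1
    rw [hexpi 2] at E2
    rw [hexpi 3] at E3
    refine four_point_contradiction (t := A / 5 + B) (d := A / 5)
      (u := Real.exp (-(A / 5 + B))) (v := Real.exp (-(A / 5)))
      (K := F - H - (J / n2) * D) (L := J / n2)
      (Real.exp_pos _).ne' (Real.exp_pos _).ne' (by positivity)
      (ne_of_lt (Real.exp_lt_one_iff.mpr (by linarith : -(A/5) < 0))) ?_ ?_ ?_ ?_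
    · linear_combination E0
    · linear_combination E1
    · linear_combination E2
    · linear_combination E3
  have hs2 : Real.sqrt n2 ≠ 0 := (Real.sqrt_pos.mpr hn2pos).ne'
  have hs3 : Real.sqrt n3 ≠ 0 := (Real.sqrt_pos.mpr hn3pos).ne'
  have key0 : ∀ {f : ℝ → ℝ} (hf : MemLp f 2 (volume.restrict (Icc (0:ℝ) 1))),
      hf.toLp f = 0 → (∫ x in (0:ℝ)..1, (f x)^2) = 0 := by
    intro f hf h
    have hae : f =ᵐ[volume.restrict (Icc (0:ℝ) 1)] 0 := by
      have h1 := hf.coeFn_toLp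
      rw [h] at h1
      exact h1.symm.trans (Lp.coeFn_zero _ _ _)
    have hae2 : (fun x => (f x)^2) =ᵐ[volume.restrict (Icc (0:ℝ) 1)] 0 := by
      filter_upwards [hae] with x hx
      simp only [Pi.zero_apply] at hx ⊢
      rw [hx]; ring
    rw [intervalIntegral.integral_of_le zero_le_one, ← integral_Icc_eq_integral_Ioc,
      integral_congr_ae hae2]
    simp
  have I11 : (inner ℝ (hm1.toLp ψ₀₁) (hm1.toLp ψ₀₁) : ℝ) = 1 := by
    rw [inner_toLp_eq hm1 hm1]
    simp [hψ₀₁]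
  have I12 : (inner ℝ (hm1.toLp ψ₀₁) (hm2.toLp ψ₀₂) : ℝ) = 0 := by
    rw [inner_toLp_eq hm1 hm2]
    simp only [hψ₀₁, hψ₀₂, one_mul]
    rw [intervalIntegral.integral_div, i2, zero_div]
  have I13 : (inner ℝ (hm1.toLp ψ₀₁) (hm3.toLp ψ₀₃) : ℝ) = 0 := by
    rw [inner_toLp_eq hm1 hm3]
    simp only [hψ₀₁, hψ₀₃, one_mul]
    rw [intervalIntegral.integral_div, i3, zero_div]
  have I22 : (inner ℝ (hm2.toLp ψ₀₂) (hm2.toLp ψ₀₂) : ℝ) = 1 := by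
    rw [inner_toLp_eq hm2 hm2]
    have he : ∀ x : ℝ, ψ₀₂ x * ψ₀₂ x = (ψt₂ x)^2 / n2 := by
      intro x
      rw [hψ₀₂]
      simp only
      rw [div_mul_div_comm, Real.mul_self_sqrt hn2pos.le, sq]
    simp only [he]
    rw [intervalIntegral.integral_div, ← hn2, div_self hn2pos.ne']
  have I33 : (inner ℝ (hm3.toLp ψ₀₃) (hm3.toLp ψ₀₃) : ℝ) = 1 := by
    rw [inner_toLp_eq hm3 hm3]
    have he : ∀ x : ℝ, ψ₀₃ x * ψ₀₃ x = (ψt₃ x)^2 / n3 := by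
      intro x
      rw [hψ₀₃]
      simp only
      rw [div_mul_div_comm, Real.mul_self_sqrt hn3pos.le, sq]
    simp only [he]
    rw [intervalIntegral.integral_div, ← hn3, div_self hn3pos.ne']
  have I23 : (inner ℝ (hm2.toLp ψ₀₂) (hm3.toLp ψ₀₃) : ℝ) = 0 := by
    rw [inner_toLp_eq hm2 hm3]
    have he : ∀ x : ℝ, ψ₀₂ x * ψ₀₃ x
        = (ψt₂ x * ψt₃ x) / (Real.sqrt n2 * Real.sqrt n3) := by
      intro x
      rw [hψ₀₂, hψ₀₃]
      simp only [div_mul_div_comm]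
    simp only [he]
    rw [intervalIntegral.integral_div, i23, zero_div]
  refine ⟨hmt2, hmt3, hm1, hm2, hm3, hg1, hg2, hg3, ?_, ?_, ?_, ?_⟩
  · intro h
    exact hn2pos.ne' (hn2.trans (key0 hmt2 h))
  · intro h
    exact hn3pos.ne' (hn3.trans (key0 hmt3 h))
  · rw [orthonormal_iff_ite]
    intro i j
    fin_cases i <;> fin_cases j <;>
      simp only [Matrix.cons_val_zero, Matrix.cons_val_one, Matrix.head_cons,
        Matrix.cons_val_two, Matrix.tail_cons, Fin.mk_zero, Fin.mk_one] <;>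
      norm_num
    · have := I11; rw [real_inner_self_eq_norm_sq] at this; norm_num at this; exact this
    · exact I12
    · exact I13
    · rw [real_inner_comm]; exact I12
    · have := I22; rw [real_inner_self_eq_norm_sq] at this; norm_num at this; exact this
    · exact I23
    · rw [real_inner_comm]; exact I13
    · rw [real_inner_comm]; exact I23
    · have := I33; rw [real_inner_self_eq_norm_sq] at this; norm_num at this; exact this
  · have hw1 : hm1.toLp ψ₀₁ = hg1.toLp Ψ01 :=
      MemLp.toLp_congr _ _ (Filter.EventuallyEq.of_eq (by rw [hψ₀₁, hΨ01]))
    have hv2 : hm2.toLp ψ₀₂ = (1 / Real.sqrt n2) • hg2.toLp Ψ02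
        + (-(D / Real.sqrt n2)) • hg1.toLp Ψ01 + (0:ℝ) • hg3.toLp Ψ03 :=
      toLp_comb3 hg2 hg1 hg3 hm2 (fun x => by
        rw [hψ₀₂, hψt₂, hΨ01]
        simp only
        field_simp
        ring)
    have hv3 : hm3.toLp ψ₀₃ = (1 / Real.sqrt n3) • hg3.toLp Ψ03
        + (-((J / n2) / Real.sqrt n3)) • hg2.toLp Ψ02
        + ((-(F - H) + (J / n2) * D) / Real.sqrt n3) • hg1.toLp Ψ01 :=
      toLp_comb3 hg3 hg2 hg1 hm3 (fun x => by
        rw [hψ₀₃, hψt₃, hψt₂, hΨ01]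
        simp only
        field_simp
        ring)
    have hw2 : hg2.toLp Ψ02 = (Real.sqrt n2) • hm2.toLp ψ₀₂
        + D • hm1.toLp ψ₀₁ + (0:ℝ) • hm3.toLp ψ₀₃ :=
      toLp_comb3 hm2 hm1 hm3 hg2 (fun x => by
        rw [hψ₀₂, hψ₀₁, hψt₂]
        simp only
        field_simp
        ring)
    have hw3 : hg3.toLp Ψ03 = (Real.sqrt n3) • hm3.toLp ψ₀₃
        + ((J / n2) * Real.sqrt n2) • hm2.toLp ψ₀₂ + (F - H) • hm1.toLp ψ₀₁ :=
      toLp_comb3 hm3 hm2 hm1 hg3 (fun x => by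
        rw [hψ₀₃, hψ₀₂, hψ₀₁, hψt₃]
        simp only
        field_simp
        ring)
    apply Submodule.span_eq_span
    · intro z hz
      simp only [Set.mem_insert_iff, Set.mem_singleton_iff] at hz
      have m1 : hg1.toLp Ψ01 ∈ Submodule.span ℝ
          ({hg1.toLp Ψ01, hg2.toLp Ψ02, hg3.toLp Ψ03} :
            Set (Lp ℝ 2 (volume.restrict (Icc (0:ℝ) 1)))) :=
        Submodule.subset_span (by simp)
      have m2 : hg2.toLp Ψ02 ∈ Submodule.span ℝ
          ({hg1.toLp Ψ01, hg2.toLp Ψ02, hg3.toLp Ψ03} :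
            Set (Lp ℝ 2 (volume.restrict (Icc (0:ℝ) 1)))) :=
        Submodule.subset_span (by simp)
      have m3 : hg3.toLp Ψ03 ∈ Submodule.span ℝ
          ({hg1.toLp Ψ01, hg2.toLp Ψ02, hg3.toLp Ψ03} :
            Set (Lp ℝ 2 (volume.restrict (Icc (0:ℝ) 1)))) :=
        Submodule.subset_span (by simp)
      rcases hz with rfl | rfl | rfl
      · rw [hw1]; exact m1
      · rw [hv2]
        exact Submodule.add_mem _ (Submodule.add_mem _
          (Submodule.smul_mem _ _ m2) (Submodule.smul_mem _ _ m1))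
          (Submodule.smul_mem _ _ m3)
      · rw [hv3]
        exact Submodule.add_mem _ (Submodule.add_mem _
          (Submodule.smul_mem _ _ m3) (Submodule.smul_mem _ _ m2))
          (Submodule.smul_mem _ _ m1)
    · intro z hz
      simp only [Set.mem_insert_iff, Set.mem_singleton_iff] at hz
      have m1 : hm1.toLp ψ₀₁ ∈ Submodule.span ℝ
          ({hm1.toLp ψ₀₁, hm2.toLp ψ₀₂, hm3.toLp ψ₀₃} :
            Set (Lp ℝ 2 (volume.restrict (Icc (0:ℝ) 1)))) :=
        Submodule.subset_span (by simp)
      have m2 : hm2.toLp ψ₀₂ ∈ Submodule.span ℝ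
          ({hm1.toLp ψ₀₁, hm2.toLp ψ₀₂, hm3.toLp ψ₀₃} :
            Set (Lp ℝ 2 (volume.restrict (Icc (0:ℝ) 1)))) :=
        Submodule.subset_span (by simp)
      have m3 : hm3.toLp ψ₀₃ ∈ Submodule.span ℝ
          ({hm1.toLp ψ₀₁, hm2.toLp ψ₀₂, hm3.toLp ψ₀₃} :
            Set (Lp ℝ 2 (volume.restrict (Icc (0:ℝ) 1)))) :=
        Submodule.subset_span (by simp)
      rcases hz with rfl | rfl | rfl
      · rw [← hw1]; exact m1
      · rw [hw2]
        exact Submodule.add_mem _ (Submodule.add_mem _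
          (Submodule.smul_mem _ _ m2) (Submodule.smul_mem _ _ m1))
          (Submodule.smul_mem _ _ m3)
      · rw [hw3]
        exact Submodule.add_mem _ (Submodule.add_mem _
          (Submodule.smul_mem _ _ m3) (Submodule.smul_mem _ _ m2))
          (Submodule.smul_mem _ _ m1)
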